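/- Let n be a positive integer, ω a complex constant, and c, λ₁, λ₂, p₁, p₂ nonzero complex constants with λ₁ ≠ λ₂; let q be a complex polynomial not identically zero and Q a nonconstant complex polynomial. Then there is no transcendental entire function f of finite order with σ(f) < 1 satisfying f(z)^n + ω f(z)^{n-1} f'(z) + q(z) e^{Q(z)} f(z+c) = p₁ e^{λ₁ z} + p₂ e^{λ₂ z} for all z ∈ ℂ. -/

import Mathlib

open Filter Polynomial

/-- The maximum modulus `M(r, f) = max_{|z| = r} |f z|` of an entire function. -/
noncomputable def maxModulus (f : ℂ → ℂ) (r : ℝ) : ℝ :=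
  sSup ((fun z => ‖f z‖) '' Metric.sphere (0 : ℂ) r)

/-- The order of growth `σ(f) = limsup_{r → ∞} log log M(r,f) / log r` of an entire
function, as an extended real number. -/
noncomputable def growthOrder (f : ℂ → ℂ) : EReal :=
  Filter.limsup
    (fun r : ℝ => ((Real.log (Real.log (maxModulus f r)) / Real.log r : ℝ) : EReal))
    Filter.atTop

open scoped Real Topology

/-!
Put `g z = f (z + c)` and `F = f ^ n + ω f ^ (n - 1) f'`. Since `σ(f) < 1`, the functions `f`, `g`,
`F` and `q g` have exponential type zero, and the equation reads
`e^Q · q g = p₁ e^{l₁ z} + p₂ e^{l₂ z} - F`.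

On a ray `z = r v` along which `e^{l₁ z}` grows and dominates `e^{l₂ z}`, the right-hand side has
size `≍ e^{r Re(l₁ v)}` while `q g` is `e^{o(r)}`, so `Re Q(r v) ≥ (Re(l₁ v) - ε) r` for large `r`;
if instead `e^{l₂ z}` dominates, the same holds with the larger `Re(l₂ v)`. The directions with
`|e^{l₁ z}| = |e^{l₂ z}|` form a line, which is avoided by density. If `Q` has degree `d ≥ 2` and
leading coefficient `a_d`, some admissible direction has `Re(a_d v^d) < 0`, so `Re Q(r v) → -∞`: a
contradiction. If `Q = b z + a`, the ray bound gives `Re(lᵢ z) ≤ Re(b z)` whenever `Re(b z) ≥ 0`,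
so `q g`, hence `g`, is bounded on a sector `|arg(b z)| ≤ α` with `α < π/2`. With
`|g z| ≤ A e^{|z|^β}` and `β < 1`, `α` can be chosen so that the complementary sector has opening
`2(π - α) < π/β`; then Phragmén–Lindelöf bounds `g` everywhere, and by Liouville `f` is constant.
-/

theorem nonneg_of_forall_norm_le_mul_exp {f : ℂ → ℂ} {C : ℝ} {u : ℂ → ℝ}
    (h : ∀ z, ‖f z‖ ≤ C * Real.exp (u z)) : 0 ≤ C :=
  (mul_nonneg_iff_of_pos_right (Real.exp_pos _)).1 ((norm_nonneg _).trans (h 0))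

theorem norm_le_maxModulus {f : ℂ → ℂ} (hf : Continuous f) (z : ℂ) :
    ‖f z‖ ≤ maxModulus f ‖z‖ :=
  le_csSup ((isCompact_sphere 0 ‖z‖).bddAbove_image hf.norm.continuousOn)
    ⟨z, by simp, rfl⟩

theorem exists_norm_le_mul_exp_rpow_of_growthOrder_lt {f : ℂ → ℂ} (hf : Continuous f) {β : ℝ}
    (h : growthOrder f < β) : ∃ C, ∀ z, ‖f z‖ ≤ C * Real.exp (‖z‖ ^ β) := by
  have hev : ∀ᶠ r : ℝ in atTop, Real.log (Real.log (maxModulus f r)) / Real.log r < β :=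
    (eventually_lt_of_limsup_lt h).mono fun r hr => EReal.coe_lt_coe_iff.1 hr
  obtain ⟨R, hR⟩ := (hev.and (eventually_gt_atTop 1)).exists_forall_of_atTop
  have hlarge : ∀ z, R ≤ ‖z‖ → ‖f z‖ ≤ Real.exp (‖z‖ ^ β) := by
    intro z hz
    obtain ⟨hlt, hz₁⟩ := hR _ hz
    by_contra! hbig
    have hM : Real.exp (‖z‖ ^ β) < maxModulus f ‖z‖ := hbig.trans_le (norm_le_maxModulus hf z)
    have hlog : β * Real.log ‖z‖ < Real.log (Real.log (maxModulus f ‖z‖)) := by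
      rw [← Real.log_rpow (by linarith)]
      refine Real.log_lt_log (by positivity) ?_
      rwa [Real.lt_log_iff_exp_lt ((Real.exp_pos _).trans hM)]
    rw [div_lt_iff₀ (Real.log_pos hz₁)] at hlt
    linarith
  obtain ⟨C, hC⟩ := (isCompact_closedBall (0 : ℂ) R).exists_bound_of_continuousOn hf.continuousOn
  refine ⟨max C 1, fun z => ?_⟩
  have hexp : 1 ≤ Real.exp (‖z‖ ^ β) := Real.one_le_exp (by positivity)
  rcases le_or_gt R ‖z‖ with hz | hz
  · exact (hlarge z hz).trans (le_mul_of_one_le_left (by positivity) (le_max_right _ _))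
  · calc ‖f z‖ ≤ max C 1 := (hC z (by simpa using hz.le)).trans (le_max_left _ _)
      _ ≤ max C 1 * Real.exp (‖z‖ ^ β) :=
        le_mul_of_one_le_right (zero_le_one.trans (le_max_right _ _)) hexp

theorem exists_lt_norm_le_mul_exp_rpow_of_growthOrder_lt {f : ℂ → ℂ} (hf : Continuous f) {σ : ℝ}
    (hσ : 0 < σ) (h : growthOrder f < σ) :
    ∃ β, 0 ≤ β ∧ β < σ ∧ ∃ C, ∀ z, ‖f z‖ ≤ C * Real.exp (‖z‖ ^ β) := by
  obtain ⟨β, hfβ, hβσ⟩ := EReal.lt_iff_exists_real_btwn.1 h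
  exact ⟨max β 0, le_max_right _ _, max_lt (mod_cast hβσ) hσ,
    exists_norm_le_mul_exp_rpow_of_growthOrder_lt hf (hfβ.trans_le (mod_cast le_max_left _ _))⟩

theorem norm_comp_add_le_mul_exp_rpow {f : ℂ → ℂ} {C β : ℝ} (hβ₀ : 0 ≤ β) (hβ₁ : β ≤ 1)
    (hf : ∀ z, ‖f z‖ ≤ C * Real.exp (‖z‖ ^ β)) (c z : ℂ) :
    ‖f (z + c)‖ ≤ C * Real.exp (‖c‖ ^ β) * Real.exp (‖z‖ ^ β) := by
  have hC := nonneg_of_forall_norm_le_mul_exp hf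
  calc ‖f (z + c)‖ ≤ C * Real.exp ((‖z‖ + ‖c‖) ^ β) := by
        refine (hf _).trans ?_
        gcongr
        exact norm_add_le z c
    _ ≤ C * Real.exp (‖c‖ ^ β + ‖z‖ ^ β) := by
        gcongr
        rw [add_comm (‖c‖ ^ β)]
        exact Real.rpow_add_le_add_rpow (norm_nonneg _) (norm_nonneg _) hβ₀ hβ₁
    _ = C * Real.exp (‖c‖ ^ β) * Real.exp (‖z‖ ^ β) := by rw [Real.exp_add, mul_assoc]

/-- Split at `T = ε ^ (β - 1)⁻¹`, the point where `T ^ (β - 1) = ε`. -/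
theorem Real.rpow_le_add_mul_of_lt_one {β ε t : ℝ} (hβ₀ : 0 ≤ β) (hβ₁ : β < 1)
    (hε : 0 < ε) (ht : 0 ≤ t) : t ^ β ≤ (ε ^ (β - 1)⁻¹) ^ β + ε * t := by
  set T := ε ^ (β - 1)⁻¹
  have hT : 0 < T := by positivity
  rcases le_total t T with htT | hTt
  · have := Real.rpow_le_rpow ht htT hβ₀
    nlinarith [mul_nonneg hε.le ht]
  · have ht₀ : 0 < t := hT.trans_le hTt
    calc t ^ β = t ^ (β - 1) * t := by rw [Real.rpow_sub_one ht₀.ne', div_mul_cancel₀ _ ht₀.ne']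
      _ ≤ T ^ (β - 1) * t :=
        mul_le_mul_of_nonneg_right (Real.rpow_le_rpow_of_nonpos hT hTt (by linarith)) ht
      _ = ε * t := by
        rw [← Real.rpow_mul hε.le, inv_mul_cancel₀ (by linarith), Real.rpow_one]
      _ ≤ T ^ β + ε * t := le_add_of_nonneg_left (Real.rpow_nonneg hT.le β)

def ExpTypeZero (f : ℂ → ℂ) : Prop :=
  ∀ ε > 0, ∃ C, ∀ z, ‖f z‖ ≤ C * Real.exp (ε * ‖z‖)

theorem expTypeZero_const (a : ℂ) : ExpTypeZero fun _ => a := fun ε hε =>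
  ⟨‖a‖, fun z => le_mul_of_one_le_right (norm_nonneg a) (Real.one_le_exp (by positivity))⟩

theorem expTypeZero_id : ExpTypeZero fun z => z := fun ε hε =>
  ⟨ε⁻¹, fun z => by
    rw [le_inv_mul_iff₀ hε]
    linarith [Real.add_one_le_exp (ε * ‖z‖)]⟩

namespace ExpTypeZero

variable {f g : ℂ → ℂ}

theorem add (hf : ExpTypeZero f) (hg : ExpTypeZero g) : ExpTypeZero fun z => f z + g z :=
  fun ε hε => by
    obtain ⟨C₁, h₁⟩ := hf ε hε
    obtain ⟨C₂, h₂⟩ := hg ε hε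
    refine ⟨C₁ + C₂, fun z => (norm_add_le _ _).trans ?_⟩
    rw [add_mul]
    exact add_le_add (h₁ z) (h₂ z)

theorem mul (hf : ExpTypeZero f) (hg : ExpTypeZero g) : ExpTypeZero fun z => f z * g z :=
  fun ε hε => by
    obtain ⟨C₁, h₁⟩ := hf (ε / 2) (half_pos hε)
    obtain ⟨C₂, h₂⟩ := hg (ε / 2) (half_pos hε)
    refine ⟨C₁ * C₂, fun z => ?_⟩
    calc ‖f z * g z‖ = ‖f z‖ * ‖g z‖ := norm_mul _ _
      _ ≤ C₁ * Real.exp (ε / 2 * ‖z‖) * (C₂ * Real.exp (ε / 2 * ‖z‖)) :=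
        mul_le_mul (h₁ z) (h₂ z) (norm_nonneg _) ((norm_nonneg _).trans (h₁ z))
      _ = C₁ * C₂ * Real.exp (ε * ‖z‖) := by
        rw [mul_mul_mul_comm, ← Real.exp_add]
        ring_nf

theorem pow (hf : ExpTypeZero f) (n : ℕ) : ExpTypeZero fun z => f z ^ n := by
  induction n with
  | zero => simpa using expTypeZero_const 1
  | succ n ih => simpa [pow_succ] using ih.mul hf

theorem comp_add (hf : ExpTypeZero f) (c : ℂ) : ExpTypeZero fun z => f (z + c) := fun ε hε => by
  obtain ⟨C, hC⟩ := hf ε hε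
  have hC₀ := nonneg_of_forall_norm_le_mul_exp hC
  refine ⟨C * Real.exp (ε * ‖c‖), fun z => (hC _).trans ?_⟩
  rw [mul_assoc, ← Real.exp_add, ← mul_add, add_comm ‖c‖]
  gcongr
  exact norm_add_le z c

theorem deriv (hf : ExpTypeZero f) (hd : Differentiable ℂ f) :
    ExpTypeZero (deriv f) := fun ε hε => by
  obtain ⟨C, hC⟩ := hf ε hε
  have hC₀ := nonneg_of_forall_norm_le_mul_exp hC
  refine ⟨C * Real.exp ε, fun z => ?_⟩
  have hcauchy := Complex.norm_deriv_le_of_forall_mem_sphere_norm_le one_pos hd.diffContOnCl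
    (C := C * Real.exp (ε * (‖z‖ + 1))) fun w hw => (hC w).trans <| by
      gcongr
      calc ‖w‖ = ‖z + (w - z)‖ := by rw [add_sub_cancel]
        _ ≤ ‖z‖ + 1 := (norm_add_le _ _).trans (by rw [mem_sphere_iff_norm.1 hw])
  rw [div_one, mul_add, mul_one, Real.exp_add] at hcauchy
  linarith

theorem of_norm_le_mul_exp_rpow {C β : ℝ} (hβ₀ : 0 ≤ β) (hβ₁ : β < 1)
    (hf : ∀ z, ‖f z‖ ≤ C * Real.exp (‖z‖ ^ β)) : ExpTypeZero f := fun ε hε => by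
  have hC₀ := nonneg_of_forall_norm_le_mul_exp hf
  refine ⟨C * Real.exp ((ε ^ (β - 1)⁻¹) ^ β), fun z => (hf z).trans ?_⟩
  rw [mul_assoc, ← Real.exp_add]
  gcongr
  exact Real.rpow_le_add_mul_of_lt_one hβ₀ hβ₁ hε (norm_nonneg z)

theorem exists_norm_le_ray (hf : ExpTypeZero f) (v : ℂ) {ε : ℝ} (hε : 0 < ε) :
    ∃ C, ∀ r : ℝ, 0 ≤ r → ‖f (r * v)‖ ≤ C * Real.exp (ε * r) := by
  obtain ⟨C, hC⟩ := hf (ε / (‖v‖ + 1)) (by positivity)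
  have hC₀ := nonneg_of_forall_norm_le_mul_exp hC
  refine ⟨C, fun r hr => (hC _).trans (mul_le_mul_of_nonneg_left (Real.exp_le_exp.2 ?_) hC₀)⟩
  rw [norm_mul, Complex.norm_real, Real.norm_of_nonneg hr, div_mul_eq_mul_div,
    div_le_iff₀ (by positivity)]
  nlinarith [norm_nonneg v]

end ExpTypeZero

theorem Polynomial.expTypeZero_eval (q : ℂ[X]) : ExpTypeZero fun z => q.eval z := by
  induction q using Polynomial.induction_on' with
  | add p q hp hq => simpa using hp.add hq
  | monomial n a => simpa using (expTypeZero_const a).mul (expTypeZero_id.pow n)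

theorem Polynomial.tendsto_eval_mul_div_pow (Q : ℂ[X]) (v : ℂ) :
    Tendsto (fun r : ℝ => Q.eval (r * v) / (r : ℂ) ^ Q.natDegree) atTop
      (𝓝 (Q.leadingCoeff * v ^ Q.natDegree)) := by
  have hlower : ∀ j < Q.natDegree,
      Tendsto (fun r : ℝ => Q.coeff j * (r * v) ^ j / (r : ℂ) ^ Q.natDegree) atTop (𝓝 0) := by
    intro j hj
    have hreal := ((Complex.continuous_ofReal.tendsto 0).comp
      (tendsto_pow_div_pow_atTop_zero hj)).const_mul (Q.coeff j * v ^ j)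
    rw [Complex.ofReal_zero, mul_zero] at hreal
    refine hreal.congr fun r => ?_
    simp only [Function.comp_apply]
    push_cast
    ring
  have hsplit : ∀ᶠ r : ℝ in atTop,
      ∑ j ∈ Finset.range Q.natDegree, Q.coeff j * (r * v) ^ j / (r : ℂ) ^ Q.natDegree
        + Q.leadingCoeff * v ^ Q.natDegree = Q.eval (r * v) / (r : ℂ) ^ Q.natDegree := by
    filter_upwards [eventually_ne_atTop 0] with r hr
    rw [eval_eq_sum_range, Finset.sum_range_succ, add_div, Finset.sum_div, leadingCoeff]
    congr 1
    field_simp [Complex.ofReal_ne_zero.2 hr]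
    ring
  simpa using (tendsto_finsetSum _ fun j hj => hlower j (Finset.mem_range.1 hj)).add
    tendsto_const_nhds |>.congr' hsplit

theorem Polynomial.re_leadingCoeff_mul_pow_nonneg {Q : ℂ[X]} {v : ℂ}
    (h : ∀ᶠ r : ℝ in atTop, 0 ≤ (Q.eval (r * v)).re) :
    0 ≤ (Q.leadingCoeff * v ^ Q.natDegree).re := by
  refine ge_of_tendsto ((Complex.continuous_re.tendsto _).comp (Q.tendsto_eval_mul_div_pow v)) ?_
  filter_upwards [h, eventually_ge_atTop 0] with r hr hr₀
  simp only [Function.comp_apply, ← Complex.ofReal_pow, Complex.div_ofReal_re]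
  positivity

theorem Polynomial.le_re_leadingCoeff_mul {Q : ℂ[X]} (hQ : Q.natDegree = 1) {v : ℂ} {κ : ℝ}
    (h : ∀ ε > 0, ∀ᶠ r : ℝ in atTop, (κ - ε) * r ≤ (Q.eval (r * v)).re) :
    κ ≤ (Q.leadingCoeff * v).re := by
  have hlim := (Complex.continuous_re.tendsto _).comp (Q.tendsto_eval_mul_div_pow v)
  simp only [hQ, pow_one] at hlim
  refine le_of_forall_sub_le fun ε hε => ge_of_tendsto hlim ?_
  filter_upwards [h ε hε, eventually_gt_atTop 0] with r hr hr₀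
  rwa [Function.comp_apply, Complex.div_ofReal_re, le_div_iff₀ hr₀]

theorem Polynomial.exists_pos_le_norm_eval {q : ℂ[X]} (hq : q ≠ 0) :
    ∃ c > 0, ∃ R, ∀ z, R ≤ ‖z‖ → c ≤ ‖q.eval z‖ := by
  rcases eq_or_ne q.natDegree 0 with hd | hd
  · rw [eq_C_of_natDegree_eq_zero hd] at hq ⊢
    exact ⟨‖q.coeff 0‖, norm_pos_iff.2 (by simpa using hq), 0, fun z _ => by simp⟩
  · have hev := (q.tendsto_norm_atTop (natDegree_pos_iff_degree_pos.1 (Nat.pos_of_ne_zero hd))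
      (l := comap norm atTop) tendsto_comap).eventually_ge_atTop 1
    obtain ⟨R, -, hR⟩ := (atTop_basis.comap (‖·‖ : ℂ → ℝ)).eventually_iff.1 hev
    exact ⟨1, one_pos, R, fun z hz => hR hz⟩

theorem Polynomial.exists_bound_of_norm_eval_mul_le {q : ℂ[X]} (hq : q ≠ 0) {g : ℂ → ℂ}
    (hg : Continuous g) {S : Set ℂ} {K : ℝ} (h : ∀ z ∈ S, ‖q.eval z * g z‖ ≤ K) :
    ∃ K', ∀ z ∈ S, ‖g z‖ ≤ K' := by
  obtain ⟨c, hc, R, hR⟩ := exists_pos_le_norm_eval hq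
  obtain ⟨B, hB⟩ := (isCompact_closedBall (0 : ℂ) R).exists_bound_of_continuousOn hg.continuousOn
  refine ⟨max B (K / c), fun z hz => ?_⟩
  rcases le_or_gt ‖z‖ R with hzR | hzR
  · exact (hB z (by simpa using hzR)).trans (le_max_left _ _)
  · refine le_max_of_le_right ((le_div_iff₀ hc).2 ?_)
    calc ‖g z‖ * c ≤ ‖g z‖ * ‖q.eval z‖ := by gcongr; exact hR z hzR.le
      _ ≤ K := by rw [mul_comm, ← norm_mul]; exact h z hz

theorem Complex.re_mul_ofReal_mul (l v : ℂ) (r : ℝ) : (l * (r * v)).re = r * (l * v).re := by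
  rw [mul_left_comm, Complex.re_ofReal_mul]

theorem Complex.tendsto_exp_mul_ofReal_of_re_neg {w : ℂ} (hw : w.re < 0) :
    Tendsto (fun r : ℝ => Complex.exp (w * r)) atTop (𝓝 0) :=
  Complex.tendsto_exp_comap_re_atBot.comp <| tendsto_comap_iff.2 <| by
    simpa [Function.comp_def] using tendsto_id.const_mul_atTop_of_neg hw

theorem exists_re_pos_re_mul_pow_neg {N : ℂ} (hN : N ≠ 0) {d : ℕ} (hd : 2 ≤ d) :
    ∃ w : ℂ, 0 < w.re ∧ (N * w ^ d).re < 0 := by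
  set A := N.arg
  -- `A + θ` lands in `±[3π/4, 5π/4]`, where the cosine is negative, while `|θ| ≤ 3π/4`.
  set θ := if 0 ≤ A then 3 * π / 4 - A / 2 else -(3 * π / 4) - A / 2
  have hA := Complex.neg_pi_lt_arg N
  have hA' := Complex.arg_le_pi N
  have hd' : (2 : ℝ) ≤ d := by exact_mod_cast hd
  have hθ : |θ| ≤ 3 * π / 4 := by
    simp only [θ]
    split_ifs <;> rw [abs_le] <;> constructor <;> linarith
  have hcos : Real.cos (A + θ) < 0 := by
    rw [← Real.cos_abs]
    simp only [θ]
    split_ifs with h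
    · rw [abs_of_pos (by linarith)]
      exact Real.cos_neg_of_pi_div_two_lt_of_lt (by linarith) (by linarith)
    · rw [abs_of_neg (by linarith)]
      exact Real.cos_neg_of_pi_div_two_lt_of_lt (by linarith) (by linarith)
  have hθd : |θ / d| < π / 2 := by
    rw [abs_div, Nat.abs_cast, div_lt_iff₀ (by positivity)]
    nlinarith [Real.pi_pos]
  refine ⟨Complex.exp ((θ / d : ℝ) * Complex.I), ?_, ?_⟩
  · rw [Complex.exp_ofReal_mul_I_re]
    exact Real.cos_pos_of_mem_Ioo (abs_lt.1 hθd)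
  · rw [← Complex.exp_nat_mul, ← Complex.norm_mul_exp_arg_mul_I N, mul_assoc, ← Complex.exp_add,
      show (d : ℂ) * ((θ / d : ℝ) * Complex.I) = θ * Complex.I by
        push_cast; field_simp [show (d : ℂ) ≠ 0 by exact_mod_cast (by omega : d ≠ 0)],
      ← add_mul, ← Complex.ofReal_add, Complex.re_ofReal_mul, Complex.exp_ofReal_mul_I_re]
    exact mul_neg_of_pos_of_neg (norm_pos_iff.2 hN) hcos

theorem Complex.dense_setOf_re_mul_ne_zero {m : ℂ} (hm : m ≠ 0) :
    Dense {v : ℂ | (m * v).re ≠ 0} :=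
  (dense_compl_singleton (0 : ℝ)).preimage
    (Complex.isOpenMap_re.comp (Homeomorph.mulLeft₀ m hm).isOpenMap)

/-- `w ↦ exp w / b` maps the strip `α ≤ im w ≤ 2π - α` onto the closure of the complement of the
sector, and its edges onto the edges of the sector. -/
theorem norm_le_of_norm_le_on_sector {g : ℂ → ℂ} (hg : Differentiable ℂ g) {b : ℂ} (hb : b ≠ 0)
    {α β A K : ℝ} (hα : α < π) (hβ : 0 ≤ β) (hαβ : β * (2 * (π - α)) < π)
    (hgA : ∀ z, ‖g z‖ ≤ A * Real.exp (‖z‖ ^ β))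
    (hK : ∀ z, ‖b * z‖ * Real.cos α ≤ (b * z).re → ‖g z‖ ≤ K) (z : ℂ) : ‖g z‖ ≤ K := by
  set H : ℂ → ℂ := fun w => g (Complex.exp w / b)
  have hHK : ∀ w : ℂ, Real.cos α ≤ Real.cos w.im → ‖H w‖ ≤ K := fun w hw => hK _ <| by
    rw [mul_div_cancel₀ _ hb, Complex.norm_exp, Complex.exp_re]
    exact mul_le_mul_of_nonneg_left hw (Real.exp_pos _).le
  have hgrowth : H =O[comap (_root_.abs ∘ Complex.re) atTop ⊓
      𝓟 (Complex.im ⁻¹' Set.Ioo α (2 * π - α))]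
      fun w => Real.exp ((‖b‖ ^ β)⁻¹ * Real.exp (β * |w.re|)) := by
    refine Asymptotics.IsBigO.of_bound |A| (Eventually.of_forall fun w => ?_)
    have hnorm : ‖Complex.exp w / b‖ ^ β = (‖b‖ ^ β)⁻¹ * Real.exp (β * w.re) := by
      rw [norm_div, Complex.norm_exp, Real.div_rpow (Real.exp_pos _).le (norm_nonneg _),
        ← Real.exp_mul, mul_comm w.re, div_eq_inv_mul]
    rw [Real.norm_of_nonneg (Real.exp_pos _).le]
    calc ‖H w‖ ≤ A * Real.exp (‖Complex.exp w / b‖ ^ β) := hgA _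
      _ ≤ |A| * Real.exp ((‖b‖ ^ β)⁻¹ * Real.exp (β * |w.re|)) := by
        rw [hnorm]
        refine mul_le_mul (le_abs_self A) ?_ (Real.exp_pos _).le (abs_nonneg A)
        gcongr
        exact le_abs_self _
  have hstrip : ∀ w : ℂ, α ≤ w.im → w.im ≤ 2 * π - α → ‖H w‖ ≤ K := fun w h₁ h₂ =>
    PhragmenLindelof.horizontal_strip
      (hg.comp (Complex.differentiable_exp.div_const b)).diffContOnCl
      ⟨β, by rw [lt_div_iff₀ (by linarith)]; linarith, _, hgrowth⟩
      (fun w hw => hHK w (by rw [hw])) (fun w hw => hHK w (by rw [hw, Real.cos_two_pi_sub])) h₁ h₂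
  rcases eq_or_ne z 0 with rfl | hz
  · exact hK 0 (by simp)
  have hlog : H (Complex.log (b * z)) = g z := by
    simp only [H, Complex.exp_log (mul_ne_zero hb hz), mul_div_cancel_left₀ z hb]
  have harg₁ := Complex.neg_pi_lt_arg (b * z)
  have harg₂ := Complex.arg_le_pi (b * z)
  rcases le_or_gt α (b * z).arg with h₁ | h₁
  · rw [← hlog]
    exact hstrip _ (by rwa [Complex.log_im]) (by rw [Complex.log_im]; linarith)
  rcases le_or_gt (b * z).arg (-α) with h₂ | h₂
  · have hshift : H (Complex.log (b * z) + 2 * π * Complex.I) = g z := by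
      rw [← hlog]
      simp only [H, Complex.exp_add, Complex.exp_two_pi_mul_I, mul_one]
    rw [← hshift]
    refine hstrip _ ?_ ?_ <;> simp only [Complex.add_im, Complex.log_im, Complex.mul_I_im] <;>
      norm_num <;> linarith
  · rw [← hlog]
    refine hHK _ ?_
    rw [Complex.log_im, ← Real.cos_abs (b * z).arg]
    exact Real.cos_le_cos_of_nonneg_of_le_pi (abs_nonneg _) hα.le (abs_le.2 ⟨h₂.le, h₁.le⟩)

section ExpEquation

variable {h F : ℂ → ℂ} {p₁ p₂ l₁ l₂ : ℂ}

theorem tendsto_exp_neg_mul_mul_sum_exp {v : ℂ} (hF : ExpTypeZero F)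
    (hv₁ : 0 < (l₁ * v).re) (hv₂ : (l₂ * v).re < (l₁ * v).re) :
    Tendsto (fun r : ℝ => Complex.exp (-(l₁ * (r * v))) *
      (p₁ * Complex.exp (l₁ * (r * v)) + p₂ * Complex.exp (l₂ * (r * v)) - F (r * v)))
      atTop (𝓝 p₁) := by
  set κ := (l₁ * v).re
  obtain ⟨C, hC⟩ := hF.exists_norm_le_ray v (half_pos hv₁)
  have hexp : Tendsto (fun r : ℝ => Complex.exp ((l₂ - l₁) * v * r)) atTop (𝓝 0) :=
    Complex.tendsto_exp_mul_ofReal_of_re_neg (by rw [sub_mul, Complex.sub_re]; exact sub_neg.2 hv₂)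
  have hdecay : Tendsto (fun r : ℝ => C * Real.exp (-(κ / 2) * r)) atTop (𝓝 0) := by
    simpa using (Real.tendsto_exp_atBot.comp
      (tendsto_id.const_mul_atTop_of_neg (neg_lt_zero.2 (half_pos hv₁)))).const_mul C
  have hFlim : Tendsto (fun r : ℝ => Complex.exp (-(l₁ * (r * v))) * F (r * v)) atTop (𝓝 0) := by
    refine squeeze_zero_norm' ?_ hdecay
    filter_upwards [eventually_ge_atTop 0] with r hr
    rw [norm_mul, Complex.norm_exp, Complex.neg_re, Complex.re_mul_ofReal_mul]
    calc Real.exp (-(r * κ)) * ‖F (r * v)‖ ≤ Real.exp (-(r * κ)) * (C * Real.exp (κ / 2 * r)) := by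
          gcongr
          exact hC r hr
      _ = C * Real.exp (-(κ / 2) * r) := by
          rw [mul_left_comm, ← Real.exp_add]
          ring_nf
  have hsum := (tendsto_const_nhds (x := p₁)).add ((hexp.const_mul p₂).sub hFlim)
  rw [mul_zero, sub_zero, add_zero] at hsum
  refine hsum.congr fun r => ?_
  have hsplit : (l₂ - l₁) * v * r = -(l₁ * (r * v)) + l₂ * (r * v) := by ring
  rw [hsplit, Complex.exp_add, Complex.exp_neg]
  field_simp
  ring

theorem eventually_le_re_of_exp_mul_eq {Q : ℂ → ℂ} {v : ℂ} (hp₁ : p₁ ≠ 0)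
    (hh : ExpTypeZero h) (hF : ExpTypeZero F)
    (heq : ∀ z, Complex.exp (Q z) * h z =
      p₁ * Complex.exp (l₁ * z) + p₂ * Complex.exp (l₂ * z) - F z)
    (hv₁ : 0 < (l₁ * v).re) (hv₂ : (l₂ * v).re < (l₁ * v).re) {ε : ℝ} (hε : 0 < ε) :
    ∀ᶠ r : ℝ in atTop, ((l₁ * v).re - ε) * r ≤ (Q (r * v)).re := by
  set κ := (l₁ * v).re
  have hp : 0 < ‖p₁‖ / 2 := half_pos (norm_pos_iff.2 hp₁)
  obtain ⟨C, hC⟩ := hh.exists_norm_le_ray v (half_pos hε)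
  have hlower : ∀ᶠ r : ℝ in atTop,
      ‖p₁‖ / 2 < Real.exp ((Q (r * v)).re - r * κ) * ‖h (r * v)‖ := by
    filter_upwards [(tendsto_exp_neg_mul_mul_sum_exp hF hv₁ hv₂).norm.eventually
      (lt_mem_nhds (half_lt_self (norm_pos_iff.2 hp₁)))] with r hr
    rwa [← heq, ← mul_assoc, ← Complex.exp_add, norm_mul, Complex.norm_exp, Complex.add_re,
      Complex.neg_re, Complex.re_mul_ofReal_mul, neg_add_eq_sub] at hr
  have hC' : ∀ᶠ r : ℝ in atTop, C ≤ ‖p₁‖ / 2 * Real.exp (ε / 2 * r) :=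
    ((Real.tendsto_exp_atTop.comp (tendsto_id.const_mul_atTop (half_pos hε))).const_mul_atTop
      hp).eventually_ge_atTop C
  filter_upwards [hlower, hC', eventually_ge_atTop 0] with r hr hCr hr₀
  set X := (Q (r * v)).re - r * κ
  have hgrow : ‖p₁‖ / 2 < ‖p₁‖ / 2 * Real.exp (X + ε * r) :=
    calc ‖p₁‖ / 2 < Real.exp X * ‖h (r * v)‖ := hr
      _ ≤ Real.exp X * (C * Real.exp (ε / 2 * r)) := by gcongr; exact hC r hr₀
      _ ≤ Real.exp X * (‖p₁‖ / 2 * Real.exp (ε / 2 * r) * Real.exp (ε / 2 * r)) := by gcongr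
      _ = ‖p₁‖ / 2 * Real.exp (X + ε * r) := by
        rw [mul_assoc (‖p₁‖ / 2), ← Real.exp_add, mul_left_comm, ← Real.exp_add]
        ring_nf
  have := Real.one_lt_exp_iff.1 ((lt_mul_iff_one_lt_right hp).1 hgrow)
  linarith

theorem eventually_le_re_of_exp_mul_eq_of_re_ne {Q : ℂ → ℂ} {v : ℂ}
    (hp₁ : p₁ ≠ 0) (hp₂ : p₂ ≠ 0) (hh : ExpTypeZero h) (hF : ExpTypeZero F)
    (heq : ∀ z, Complex.exp (Q z) * h z =
      p₁ * Complex.exp (l₁ * z) + p₂ * Complex.exp (l₂ * z) - F z)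
    (hv₁ : 0 < (l₁ * v).re) (hv : (l₁ * v).re ≠ (l₂ * v).re) {ε : ℝ} (hε : 0 < ε) :
    ∀ᶠ r : ℝ in atTop, ((l₁ * v).re - ε) * r ≤ (Q (r * v)).re := by
  rcases hv.lt_or_gt with hlt | hgt
  · filter_upwards [eventually_le_re_of_exp_mul_eq hp₂ hh hF (fun z => by rw [heq]; ring)
      (hv₁.trans hlt) hlt hε, eventually_ge_atTop 0] with r hr hr₀
    nlinarith
  · exact eventually_le_re_of_exp_mul_eq hp₁ hh hF heq hv₁ hgt hε

theorem Polynomial.natDegree_le_one_of_exp_mul_eq {Q : ℂ[X]} (hp₁ : p₁ ≠ 0) (hp₂ : p₂ ≠ 0)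
    (hl₁ : l₁ ≠ 0) (hll : l₁ ≠ l₂) (hh : ExpTypeZero h) (hF : ExpTypeZero F)
    (heq : ∀ z, Complex.exp (Q.eval z) * h z =
      p₁ * Complex.exp (l₁ * z) + p₂ * Complex.exp (l₂ * z) - F z) :
    Q.natDegree ≤ 1 := by
  by_contra! hd
  set U := {v : ℂ | 0 < (l₁ * v).re} ∩ {v | (Q.leadingCoeff * v ^ Q.natDegree).re < 0}
  have hU : IsOpen U :=
    (isOpen_lt continuous_const (by fun_prop)).inter (isOpen_lt (by fun_prop) continuous_const)
  have hne : U.Nonempty := by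
    obtain ⟨w, hw, hNw⟩ := exists_re_pos_re_mul_pow_neg (mul_ne_zero
      (leadingCoeff_ne_zero.2 (ne_zero_of_natDegree_gt hd))
      (pow_ne_zero _ (by simpa using hl₁ : starRingEnd ℂ l₁ ≠ 0))) hd
    refine ⟨starRingEnd ℂ l₁ * w, ?_, ?_⟩
    · show 0 < (l₁ * (starRingEnd ℂ l₁ * w)).re
      rw [← mul_assoc, Complex.mul_conj, Complex.re_ofReal_mul]
      exact mul_pos (Complex.normSq_pos.2 hl₁) hw
    · show (Q.leadingCoeff * (starRingEnd ℂ l₁ * w) ^ Q.natDegree).re < 0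
      rwa [mul_pow, ← mul_assoc]
  obtain ⟨v, ⟨hv₁, hvQ⟩, hv⟩ :=
    (Complex.dense_setOf_re_mul_ne_zero (sub_ne_zero.2 hll)).inter_open_nonempty U hU hne
  replace hv : (l₁ * v).re ≠ (l₂ * v).re := by simpa [sub_mul, sub_eq_zero] using hv
  have hnonneg : ∀ᶠ r : ℝ in atTop, 0 ≤ (Q.eval (r * v)).re := by
    filter_upwards [eventually_le_re_of_exp_mul_eq_of_re_ne hp₁ hp₂ hh hF heq hv₁ hv hv₁]
      with r hr
    simpa using hr
  exact hvQ.not_ge (re_leadingCoeff_mul_pow_nonneg hnonneg)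

theorem Polynomial.re_mul_le_re_leadingCoeff_mul {Q : ℂ[X]} (hQ : Q.natDegree = 1)
    (hp₁ : p₁ ≠ 0) (hp₂ : p₂ ≠ 0) (hll : l₁ ≠ l₂) (hh : ExpTypeZero h) (hF : ExpTypeZero F)
    (heq : ∀ z, Complex.exp (Q.eval z) * h z =
      p₁ * Complex.exp (l₁ * z) + p₂ * Complex.exp (l₂ * z) - F z)
    {v : ℂ} (hv : 0 ≤ (Q.leadingCoeff * v).re) : (l₁ * v).re ≤ (Q.leadingCoeff * v).re := by
  by_contra! hlt
  set U := {v : ℂ | 0 < (l₁ * v).re} ∩ {v | (Q.leadingCoeff * v).re < (l₁ * v).re}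
  have hU : IsOpen U :=
    (isOpen_lt continuous_const (by fun_prop)).inter (isOpen_lt (by fun_prop) (by fun_prop))
  obtain ⟨w, ⟨hw₁, hwQ⟩, hw⟩ := (Complex.dense_setOf_re_mul_ne_zero
    (sub_ne_zero.2 hll)).inter_open_nonempty U hU ⟨v, hv.trans_lt hlt, hlt⟩
  replace hw : (l₁ * w).re ≠ (l₂ * w).re := by simpa [sub_mul, sub_eq_zero] using hw
  exact hwQ.not_ge (le_re_leadingCoeff_mul hQ fun ε hε =>
    eventually_le_re_of_exp_mul_eq_of_re_ne hp₁ hp₂ hh hF heq hw₁ hw hε)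

theorem exists_norm_le_on_sector_of_exp_mul_eq {a b : ℂ} {s : ℝ} (hb : b ≠ 0) (hs : 0 < s)
    (hF : ExpTypeZero F)
    (heq : ∀ z, Complex.exp (b * z + a) * h z =
      p₁ * Complex.exp (l₁ * z) + p₂ * Complex.exp (l₂ * z) - F z)
    (hl₁ : ∀ z, 0 ≤ (b * z).re → (l₁ * z).re ≤ (b * z).re)
    (hl₂ : ∀ z, 0 ≤ (b * z).re → (l₂ * z).re ≤ (b * z).re) :
    ∃ K, ∀ z, ‖b * z‖ * s ≤ (b * z).re → ‖h z‖ ≤ K := by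
  obtain ⟨C, hC⟩ := hF (‖b‖ * s) (mul_pos (norm_pos_iff.2 hb) hs)
  have hC₀ := nonneg_of_forall_norm_le_mul_exp hC
  refine ⟨(‖p₁‖ + ‖p₂‖ + C) / Real.exp a.re, fun z hz => ?_⟩
  have hre : 0 ≤ (b * z).re := (by positivity : 0 ≤ ‖b * z‖ * s).trans hz
  rw [le_div_iff₀ (Real.exp_pos _)]
  refine le_of_mul_le_mul_left ?_ (Real.exp_pos (b * z).re)
  calc Real.exp (b * z).re * (‖h z‖ * Real.exp a.re) = ‖Complex.exp (b * z + a) * h z‖ := by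
        rw [norm_mul, Complex.norm_exp, Complex.add_re, Real.exp_add]
        ring
    _ ≤ ‖p₁ * Complex.exp (l₁ * z)‖ + ‖p₂ * Complex.exp (l₂ * z)‖ + ‖F z‖ := by
        rw [heq]
        exact (norm_sub_le _ _).trans (by gcongr; exact norm_add_le _ _)
    _ ≤ ‖p₁‖ * Real.exp (b * z).re + ‖p₂‖ * Real.exp (b * z).re + C * Real.exp (b * z).re := by
        simp only [norm_mul, Complex.norm_exp]
        refine add_le_add (add_le_add ?_ ?_) ((hC z).trans ?_)
        · exact mul_le_mul_of_nonneg_left (Real.exp_le_exp.2 (hl₁ z hre)) (norm_nonneg _)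
        · exact mul_le_mul_of_nonneg_left (Real.exp_le_exp.2 (hl₂ z hre)) (norm_nonneg _)
        · refine mul_le_mul_of_nonneg_left (Real.exp_le_exp.2 ?_) hC₀
          rw [norm_mul] at hz
          linarith
    _ = Real.exp (b * z).re * (‖p₁‖ + ‖p₂‖ + C) := by ring

theorem exists_forall_eq_of_exp_mul_eq {Q q : ℂ[X]} {g : ℂ → ℂ} {A β : ℝ}
    (hQ : Q.natDegree = 1) (hq : q ≠ 0) (hp₁ : p₁ ≠ 0) (hp₂ : p₂ ≠ 0) (hll : l₁ ≠ l₂)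
    (hg : Differentiable ℂ g) (hβ₀ : 0 ≤ β) (hβ₁ : β < 1)
    (hgA : ∀ z, ‖g z‖ ≤ A * Real.exp (‖z‖ ^ β)) (hF : ExpTypeZero F)
    (heq : ∀ z, Complex.exp (Q.eval z) * (q.eval z * g z) =
      p₁ * Complex.exp (l₁ * z) + p₂ * Complex.exp (l₂ * z) - F z) :
    ∃ k, ∀ z, g z = k := by
  set b := Q.leadingCoeff
  have hb : b ≠ 0 := leadingCoeff_ne_zero.2 (ne_zero_of_natDegree_gt (hQ ▸ zero_lt_one))
  have hh : ExpTypeZero fun z => q.eval z * g z :=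
    q.expTypeZero_eval.mul (.of_norm_le_mul_exp_rpow hβ₀ hβ₁ hgA)
  have hl₁ : ∀ z, 0 ≤ (b * z).re → (l₁ * z).re ≤ (b * z).re := fun z =>
    re_mul_le_re_leadingCoeff_mul hQ hp₁ hp₂ hll hh hF heq
  have hl₂ : ∀ z, 0 ≤ (b * z).re → (l₂ * z).re ≤ (b * z).re := fun z =>
    re_mul_le_re_leadingCoeff_mul hQ hp₂ hp₁ hll.symm hh hF (fun z => by rw [heq]; ring)
  have hQeval : ∀ z, Q.eval z = b * z + Q.coeff 0 := fun z => by
    conv_lhs => rw [eq_X_add_C_of_natDegree_le_one hQ.le]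
    simp [b, leadingCoeff, hQ]
  set α := π * (1 + β) / 4 with hα
  have hcos : 0 < Real.cos α :=
    Real.cos_pos_of_mem_Ioo ⟨by nlinarith [Real.pi_pos], by nlinarith [Real.pi_pos]⟩
  obtain ⟨K, hK⟩ := exists_norm_le_on_sector_of_exp_mul_eq hb hcos hF
    (fun z => hQeval z ▸ heq z) hl₁ hl₂
  obtain ⟨K', hK'⟩ := exists_bound_of_norm_eval_mul_le hq hg.continuous
    (S := {z | ‖b * z‖ * Real.cos α ≤ (b * z).re}) hK
  have hbound := norm_le_of_norm_le_on_sector hg hb (by nlinarith [Real.pi_pos]) hβ₀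
    (by nlinarith [mul_pos Real.pi_pos (mul_pos (sub_pos.2 hβ₁) (by linarith : (0:ℝ) < 2 - β))])
    hgA hK'
  exact hg.exists_const_forall_eq_of_bounded
    (isBounded_iff_forall_norm_le.2 ⟨K', Set.forall_mem_range.2 hbound⟩)

end ExpEquation

theorem stmt_5_general (n : ℕ) (ω : ℂ)
    (c l₁ l₂ p₁ p₂ : ℂ) (hl₁ : l₁ ≠ 0)
    (hp₁ : p₁ ≠ 0) (hp₂ : p₂ ≠ 0) (hll : l₁ ≠ l₂)
    (q Q : Polynomial ℂ) (hq : q ≠ 0) (hQ : 1 ≤ Q.natDegree) :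
    ¬ ∃ f : ℂ → ℂ,
      Differentiable ℂ f ∧
      (¬ ∃ p : Polynomial ℂ, ∀ z, f z = p.eval z) ∧
      growthOrder f < ((1 : ℝ) : EReal) ∧
      (∀ z : ℂ, f z ^ n + ω * f z ^ (n - 1) * deriv f z
          + q.eval z * Complex.exp (Q.eval z) * f (z + c)
          = p₁ * Complex.exp (l₁ * z) + p₂ * Complex.exp (l₂ * z)) := by
  rintro ⟨f, hf, hpoly, horder, hfeq⟩
  obtain ⟨β, hβ₀, hβ₁, A, hfA⟩ :=
    exists_lt_norm_le_mul_exp_rpow_of_growthOrder_lt hf.continuous one_pos horder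
  have hf₀ : ExpTypeZero f := .of_norm_le_mul_exp_rpow hβ₀ hβ₁ hfA
  have hF : ExpTypeZero fun z => f z ^ n + ω * f z ^ (n - 1) * deriv f z :=
    (hf₀.pow n).add (((expTypeZero_const ω).mul (hf₀.pow (n - 1))).mul (hf₀.deriv hf))
  have heq : ∀ z, Complex.exp (Q.eval z) * (q.eval z * f (z + c)) =
      p₁ * Complex.exp (l₁ * z) + p₂ * Complex.exp (l₂ * z)
        - (f z ^ n + ω * f z ^ (n - 1) * deriv f z) := fun z => by
    linear_combination hfeq z
  have hQ₁ : Q.natDegree = 1 := le_antisymm (natDegree_le_one_of_exp_mul_eq hp₁ hp₂ hl₁ hll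
    (q.expTypeZero_eval.mul (hf₀.comp_add c)) hF heq) hQ
  obtain ⟨k, hk⟩ := exists_forall_eq_of_exp_mul_eq hQ₁ hq hp₁ hp₂ hll
    (hf.comp (differentiable_id.add_const c)) hβ₀ hβ₁
    (norm_comp_add_le_mul_exp_rpow hβ₀ hβ₁.le hfA c) hF heq
  exact hpoly ⟨C k, fun z => by simpa using hk (z - c)⟩

theorem stmt_5 (n : ℕ) (hn : 1 ≤ n) (ω : ℂ)
    (c l₁ l₂ p₁ p₂ : ℂ) (hc : c ≠ 0) (hl₁ : l₁ ≠ 0) (hl₂ : l₂ ≠ 0)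
    (hp₁ : p₁ ≠ 0) (hp₂ : p₂ ≠ 0) (hll : l₁ ≠ l₂)
    (q Q : Polynomial ℂ) (hq : q ≠ 0) (hQ : 1 ≤ Q.natDegree) :
    ¬ ∃ f : ℂ → ℂ,
      Differentiable ℂ f ∧
      (¬ ∃ p : Polynomial ℂ, ∀ z, f z = p.eval z) ∧
      growthOrder f < ((1 : ℝ) : EReal) ∧
      (∀ z : ℂ, f z ^ n + ω * f z ^ (n - 1) * deriv f z
          + q.eval z * Complex.exp (Q.eval z) * f (z + c)
          = p₁ * Complex.exp (l₁ * z) + p₂ * Complex.exp (l₂ * z)) :=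
  stmt_5_general n ω c l₁ l₂ p₁ p₂ hl₁ hp₁ hp₂ hll q Q hq hQ
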